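/- arXiv:2003.14204 — 2 statements merged into one kernel-verified Lean document; each statement's English description precedes it below -/
import Mathlib

section
/- Let N = (P, T, Pre, Post) be a Petri net with a basis partition π = (T_E, T_I), and let M_b be any marking. Then the implicit reach of M_b equals the set of markings characterized by the state equation of the implicit subnet: R_I(M_b) = { M : P → ℕ | ∃ y ∈ ℕ^{T_I}, M = M_b + C_I·y as integer vectors }. -/
open scoped BigOperators

/-- A Petri net over places `P` and transitions `T`. -/
structure PetriNet (P T : Type) where
  Pre : P → T → ℕ
  Post : P → T → ℕ

namespace PetriNet

variable {P T : Type}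

/-- Incidence matrix `C = Post − Pre` (integer valued). -/
def C (N : PetriNet P T) (p : P) (t : T) : ℤ :=
  (N.Post p t : ℤ) - (N.Pre p t : ℤ)

/-- A transition `t` is enabled at marking `M`. -/
def Enabled (N : PetriNet P T) (M : P → ℕ) (t : T) : Prop :=
  ∀ p, N.Pre p t ≤ M p

/-- `Fires N M σ M'` means the sequence `σ` is enabled at `M` and its firing
yields `M'`, i.e. `M[σ⟩M'`. -/
inductive Fires (N : PetriNet P T) : (P → ℕ) → List T → (P → ℕ) → Prop
  | nil (M : P → ℕ) : Fires N M [] M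
  | cons {M M' M'' : P → ℕ} {t : T} {σ : List T} :
      N.Enabled M t →
      (∀ p, M' p = M p + N.Post p t - N.Pre p t) →
      Fires N M' σ M'' →
      Fires N M (t :: σ) M''

/-- The reachability set `R(N, M0)`. -/
def Reach (N : PetriNet P T) (M0 : P → ℕ) : Set (P → ℕ) :=
  {M | ∃ σ : List T, N.Fires M0 σ M}

/-- Arcs of the underlying directed graph on `P ⊕ T`, where only transitions
in `TI` are kept (the `TI`-induced subnet). -/
def Arc (N : PetriNet P T) (TI : Set T) : (P ⊕ T) → (P ⊕ T) → Prop
  | Sum.inl p, Sum.inr t => t ∈ TI ∧ 0 < N.Pre p t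
  | Sum.inr t, Sum.inl p => t ∈ TI ∧ 0 < N.Post p t
  | _, _ => False

/-- The `TI`-induced subnet is acyclic: no directed cycle in its graph. -/
def AcyclicOn (N : PetriNet P T) (TI : Set T) : Prop :=
  ∀ x, ¬ Relation.TransGen (N.Arc TI) x x

/-- `(TE, TI)` is a basis partition: `TE` and `TI` partition `T` and the
`TI`-induced subnet is acyclic. -/
def IsBasisPartition (N : PetriNet P T) (TE TI : Set T) : Prop :=
  (∀ t, t ∈ TE ↔ t ∉ TI) ∧ N.AcyclicOn TI

/-- Boundedness of the marked net `⟨N, M0⟩`. -/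
def Bounded (N : PetriNet P T) (M0 : P → ℕ) : Prop :=
  ∃ k : ℕ, ∀ M ∈ N.Reach M0, ∀ p, M p ≤ k

/-- A marking is dead if no transition is enabled at it. -/
def Dead (N : PetriNet P T) (M : P → ℕ) : Prop :=
  ∀ t : T, ¬ N.Enabled M t

/-- The set `Σ(M, t)` of explanations of `t` at `M`: implicit sequences whose
firing from `M` yields a marking enabling `t`. -/
def Expl (N : PetriNet P T) (TI : Set T) (M : P → ℕ) (t : T) : Set (List T) :=
  {σ | (∀ u ∈ σ, u ∈ TI) ∧ ∃ M', N.Fires M σ M' ∧ ∀ p, N.Pre p t ≤ M' p}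

/-- The set `Σ_min(M, t)` of minimal explanations of `t` at `M`. -/
def ExplMin [DecidableEq T] (N : PetriNet P T) (TI : Set T) (M : P → ℕ) (t : T) :
    Set (List T) :=
  {σ | σ ∈ N.Expl TI M t ∧
    ¬ ∃ σ' ∈ N.Expl TI M t,
      (∀ u, σ'.count u ≤ σ.count u) ∧ ∃ u, σ'.count u ≠ σ.count u}

/-- The set `Σ_max(M, t)` of maximal explanations of `t` at `M`. -/
def ExplMax [DecidableEq T] (N : PetriNet P T) (TI : Set T) (M : P → ℕ) (t : T) :
    Set (List T) :=
  {σ | σ ∈ N.Expl TI M t ∧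
    ¬ ∃ σ' ∈ N.Expl TI M t,
      (∀ u, σ.count u ≤ σ'.count u) ∧ ∃ u, σ'.count u ≠ σ.count u}

/-- `Y_min(M, t)`: firing vectors of minimal explanations. -/
def Ymin [DecidableEq T] (N : PetriNet P T) (TI : Set T) (M : P → ℕ) (t : T) :
    Set (T → ℕ) :=
  {y | ∃ σ ∈ N.ExplMin TI M t, ∀ u, σ.count u = y u}

/-- `Y_max(M, t)`: firing vectors of maximal explanations. -/
def Ymax [DecidableEq T] (N : PetriNet P T) (TI : Set T) (M : P → ℕ) (t : T) :
    Set (T → ℕ) :=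
  {y | ∃ σ ∈ N.ExplMax TI M t, ∀ u, σ.count u = y u}

/-- The set of basis markings `M_B` (smallest set containing `M0` and closed
under minimal-explanation steps). -/
inductive Basis [DecidableEq T] [Fintype T] (N : PetriNet P T) (TE TI : Set T)
    (M0 : P → ℕ) : (P → ℕ) → Prop
  | base : Basis N TE TI M0 M0
  | step {M M' : P → ℕ} {t : T} {y : T → ℕ} :
      Basis N TE TI M0 M →
      t ∈ TE →
      y ∈ N.Ymin TI M t →
      (∀ p, (M' p : ℤ) = (M p : ℤ) + (∑ u, N.C p u * y u) + N.C p t) →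
      Basis N TE TI M0 M'

/-- The set of minimax basis markings `M_BM` (smallest set containing `M0` and
closed under minimal- or maximal-explanation steps). -/
inductive Minimax [DecidableEq T] [Fintype T] (N : PetriNet P T) (TE TI : Set T)
    (M0 : P → ℕ) : (P → ℕ) → Prop
  | base : Minimax N TE TI M0 M0
  | step {M M' : P → ℕ} {t : T} {y : T → ℕ} :
      Minimax N TE TI M0 M →
      t ∈ TE →
      (y ∈ N.Ymin TI M t ∨ y ∈ N.Ymax TI M t) →
      (∀ p, (M' p : ℤ) = (M p : ℤ) + (∑ u, N.C p u * y u) + N.C p t) →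
      Minimax N TE TI M0 M'

/-- The implicit reach `R_I(M_b)`: markings reachable from `M_b` by firing
only implicit transitions. -/
def ReachI (N : PetriNet P T) (TI : Set T) (Mb : P → ℕ) : Set (P → ℕ) :=
  {M | ∃ σ : List T, (∀ u ∈ σ, u ∈ TI) ∧ N.Fires Mb σ M}

/-- One step of the minimax-BRG: `M1 ⇒ M2`. -/
def BrgStep [DecidableEq T] [Fintype T] (N : PetriNet P T) (TE TI : Set T)
    (M1 M2 : P → ℕ) : Prop :=
  ∃ t ∈ TE, ∃ y : T → ℕ, (y ∈ N.Ymin TI M1 t ∨ y ∈ N.Ymax TI M1 t) ∧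
    ∀ p, (M2 p : ℤ) = (M1 p : ℤ) + (∑ u, N.C p u * y u) + N.C p t

/-- One step of the BRG using only minimal explanations. -/
def MinBrgStep [DecidableEq T] [Fintype T] (N : PetriNet P T) (TE TI : Set T)
    (M1 M2 : P → ℕ) : Prop :=
  ∃ t ∈ TE, ∃ y ∈ N.Ymin TI M1 t,
    ∀ p, (M2 p : ℤ) = (M1 p : ℤ) + (∑ u, N.C p u * y u) + N.C p t

/-- The minimax-BRG is unobstructed: every minimax basis marking can reach, by
BRG-steps, an i-coreachable minimax basis marking. -/
def Unobstructed [DecidableEq T] [Fintype T] (N : PetriNet P T) (TE TI : Set T)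
    (M0 : P → ℕ) (MF : Set (P → ℕ)) : Prop :=
  ∀ Mb, N.Minimax TE TI M0 Mb →
    ∃ Mb', Relation.ReflTransGen (N.BrgStep TE TI) Mb Mb' ∧
      N.Minimax TE TI M0 Mb' ∧ (N.ReachI TI Mb' ∩ MF).Nonempty

/-- `Σ_I,max(M)`: maximal implicit firing sequences at `M`. -/
def ImplMax [DecidableEq T] (N : PetriNet P T) (TI : Set T) (M : P → ℕ) :
    Set (List T) :=
  {σ | (∀ u ∈ σ, u ∈ TI) ∧ (∃ M', N.Fires M σ M') ∧
    ¬ ∃ σ' : List T, (∀ u ∈ σ', u ∈ TI) ∧ (∃ M', N.Fires M σ' M') ∧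
      (∀ u, σ.count u ≤ σ'.count u) ∧ ∃ u, σ'.count u ≠ σ.count u}

/-- `Y_I,max(M)`: firing vectors of maximal implicit firing sequences. -/
def YImax [DecidableEq T] (N : PetriNet P T) (TI : Set T) (M : P → ℕ) :
    Set (T → ℕ) :=
  {y | ∃ σ ∈ N.ImplMax TI M, ∀ u, σ.count u = y u}

end PetriNet

/-!
A firing sequence changes the marking by `C` applied to its Parikh vector, which gives one
inclusion. Conversely, let `y ≥ 0` be supported on `T_I` with `M = M_b + C y`. Since the
implicit subnet is acyclic, the support of `y` contains a transition `t` that no transition of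
the support feeds. The input places of `t` then only lose tokens along `y`, so `M ≥ 0` forces
`t` to be enabled at `M_b`; firing it leaves the same situation for `y - e_t`, and we recurse
on `∑ y`.
-/

namespace PetriNet

variable {P T : Type} (N : PetriNet P T)

def fire (M : P → ℕ) (t : T) : P → ℕ :=
  fun p => M p + N.Post p t - N.Pre p t

lemma sum_C_mul_add_single [Fintype T] [DecidableEq T] (p : P) (y : T → ℕ) (t : T) :
    ∑ u, N.C p u * ((y + Pi.single t 1 : T → ℕ) u : ℤ) = ∑ u, N.C p u * y u + N.C p t := by
  simp only [Pi.add_apply, Nat.cast_add, mul_add, Finset.sum_add_distrib]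
  congr 1
  rw [Finset.sum_eq_single t (fun u _ hu => by simp [hu]) (by simp)]
  simp

variable {N}

lemma natCast_fire {M : P → ℕ} {t : T} (h : N.Enabled M t) (p : P) :
    (N.fire M t p : ℤ) = M p + N.C p t := by
  have := h p
  simp only [fire, C]
  omega

lemma Fires.natCast_eq_add_sum_count [Fintype T] [DecidableEq T] {M M' : P → ℕ}
    {σ : List T} (h : N.Fires M σ M') (p : P) :
    (M' p : ℤ) = M p + ∑ t, N.C p t * σ.count t := by
  induction h with
  | nil => simp
  | @cons M M' M'' t σ hen hfire _ ih =>
    have hcount :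
        ∀ u, (t :: σ).count u = ((fun u => σ.count u) + Pi.single t 1 : T → ℕ) u := by
      intro u
      rcases eq_or_ne u t with rfl | hne
      · simp
      · simp [hne, Ne.symm hne]
    have hM' : M' = N.fire M t := funext hfire
    simp only [hcount]
    rw [ih, sum_C_mul_add_single, hM', natCast_fire hen]
    ring

variable (N) in
def Feeds (TI : Set T) (a b : T) : Prop :=
  a ∈ TI ∧ b ∈ TI ∧ ∃ p, 0 < N.Post p a ∧ 0 < N.Pre p b

lemma transGen_arc_of_transGen_feeds {TI : Set T} {a b : T}
    (h : Relation.TransGen (N.Feeds TI) a b) :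
    Relation.TransGen (N.Arc TI) (.inr a) (.inr b) := by
  have arc : ∀ {c d}, N.Feeds TI c d → Relation.TransGen (N.Arc TI) (.inr c) (.inr d) :=
    fun {c d} ⟨hc, hd, p, hpost, hpre⟩ =>
      .tail (.single (show N.Arc TI (.inr c) (.inl p) from ⟨hc, hpost⟩))
        (show N.Arc TI (.inl p) (.inr d) from ⟨hd, hpre⟩)
  induction h with
  | single h => exact arc h
  | tail _ h ih => exact ih.trans (arc h)

lemma AcyclicOn.wellFounded_feeds [Finite T] {TI : Set T} (hac : N.AcyclicOn TI) :
    WellFounded (N.Feeds TI) :=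
  have : Std.Irrefl (Relation.TransGen (N.Feeds TI)) :=
    ⟨fun _ h => hac _ (transGen_arc_of_transGen_feeds h)⟩
  Subrelation.wf (fun h => Relation.TransGen.single h) (Finite.wellFounded_of_trans_of_irrefl _)

lemma Enabled.of_natCast_eq_add_sum [Fintype T] {Mb M : P → ℕ} {y : T → ℕ} {t : T}
    (h : ∀ p, (M p : ℤ) = Mb p + ∑ u, N.C p u * y u) (ht : y t ≠ 0)
    (hsource : ∀ u, y u ≠ 0 → ∀ p, 0 < N.Pre p t → N.Post p u = 0) : N.Enabled Mb t := by
  intro p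
  rcases Nat.eq_zero_or_pos (N.Pre p t) with hpre | hpre
  · simp [hpre]
  have hC : ∀ u, N.C p u * y u = -(N.Pre p u * y u) := fun u => by
    rcases eq_or_ne (y u) 0 with hu | hu
    · simp [hu]
    · simp [C, hsource u hu p hpre]
  have hM := h p
  simp only [hC, Finset.sum_neg_distrib] at hM
  have : (N.Pre p t : ℤ) ≤ Mb p := calc
    (N.Pre p t : ℤ) ≤ N.Pre p t * y t := le_mul_of_one_le_right (by positivity) (by omega)
    _ ≤ ∑ u, (N.Pre p u : ℤ) * y u :=
      Finset.single_le_sum (f := fun u => (N.Pre p u : ℤ) * y u) (fun _ _ => by positivity)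
        (Finset.mem_univ t)
    _ ≤ Mb p := by omega
  exact_mod_cast this

lemma mem_reachI_of_mem_reachI_fire {TI : Set T} {M M' : P → ℕ} {t : T} (ht : t ∈ TI)
    (hen : N.Enabled M t) (h : M' ∈ N.ReachI TI (N.fire M t)) : M' ∈ N.ReachI TI M :=
  let ⟨σ, hσ, hfires⟩ := h
  ⟨t :: σ, List.forall_mem_cons.2 ⟨ht, hσ⟩, .cons hen (fun _ => rfl) hfires⟩

theorem AcyclicOn.mem_reachI_of_natCast_eq_add_sum [Fintype T] [DecidableEq T] {TI : Set T}
    (hac : N.AcyclicOn TI) {y : T → ℕ} (hy : ∀ t ∉ TI, y t = 0) {Mb M : P → ℕ}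
    (h : ∀ p, (M p : ℤ) = Mb p + ∑ t, N.C p t * y t) : M ∈ N.ReachI TI Mb := by
  rcases eq_or_ne y 0 with rfl | hne
  · obtain rfl : M = Mb := funext fun p => by simpa using h p
    exact ⟨[], by simp, .nil M⟩
  obtain ⟨t, ht, hmin⟩ := hac.wellFounded_feeds.has_min {u | y u ≠ 0}
    (Function.ne_iff.1 hne)
  have htI : t ∈ TI := by_contra fun htI => ht (hy t htI)
  have hen : N.Enabled Mb t := Enabled.of_natCast_eq_add_sum h ht fun u hu p hpre =>
    by_contra fun hpost => hmin u hu ⟨by_contra fun huI => hu (hy u huI), htI, p,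
      Nat.pos_of_ne_zero hpost, hpre⟩
  set y' := y - Pi.single t 1
  have hy' : y' + Pi.single t 1 = y := tsub_add_cancel_of_le fun u => by
    rcases eq_or_ne u t with rfl | hu
    · simpa [Nat.one_le_iff_ne_zero] using ht
    · simp [hu]
  have : ∑ u, y' u < ∑ u, y u := by
    rw [← hy']
    simp [Finset.sum_add_distrib]
  refine mem_reachI_of_mem_reachI_fire htI hen
    (hac.mem_reachI_of_natCast_eq_add_sum (y := y') (fun u hu => ?_) fun p => ?_)
  · simp [y', hy u hu]
  · rw [h p, ← hy', sum_C_mul_add_single, natCast_fire hen]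
    ring
termination_by ∑ u, y u

end PetriNet

open PetriNet in
theorem statement1_general {P T : Type} [Fintype T]
    (N : PetriNet P T) (TE TI : Set T)
    (hbp : N.IsBasisPartition TE TI) (Mb : P → ℕ) :
    N.ReachI TI Mb =
      {M : P → ℕ | ∃ y : T → ℕ, (∀ t ∉ TI, y t = 0) ∧
        ∀ p, (M p : ℤ) = (Mb p : ℤ) + ∑ t, N.C p t * y t} := by
  classical
  ext M
  constructor
  · rintro ⟨σ, hσ, hfires⟩
    exact ⟨fun t => σ.count t, fun t ht => List.count_eq_zero.2 fun hmem => ht (hσ t hmem),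
      hfires.natCast_eq_add_sum_count⟩
  · rintro ⟨y, hy, h⟩
    exact hbp.2.mem_reachI_of_natCast_eq_add_sum hy h

open PetriNet in
/-- The implicit reach equals the solution set of the state
equation of the (acyclic) implicit subnet. -/
theorem statement1 {P T : Type} [Fintype T] [DecidableEq T]
    (N : PetriNet P T) (TE TI : Set T)
    (hbp : N.IsBasisPartition TE TI) (Mb : P → ℕ) :
    N.ReachI TI Mb =
      {M : P → ℕ | ∃ y : T → ℕ, (∀ t ∉ TI, y t = 0) ∧
        ∀ p, (M p : ℤ) = (Mb p : ℤ) + ∑ t, N.C p t * y t} :=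
  statement1_general N TE TI hbp Mb
end

section
/- Let ⟨N, M0⟩ be a bounded marked Petri net with a basis partition π = (T_E, T_I). For every M ∈ R(N, M0), every t ∈ T_E, and all σ, σ' ∈ Σ(M,t): if φ(σ) − φ(σ') = ỹ is componentwise nonnegative and M[σ t⟩M', then there exists σ'' ∈ T_I* with φ(σ'') = ỹ such that M[σ' t σ''⟩M' (i.e., firing σ' then t then σ'' from M also reaches M'). -/
/-!
By the marking equation, the marking reached after `σ' t` differs from `M'` by the effect of the
multiset `φ(σ) − φ(σ')` of implicit transitions. In an acyclic subnet the marking equation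
suffices for reachability: a member of the multiset that is minimal in the causal order has no
producer of its input places in the multiset, so these places can only lose tokens and it is
enabled; firing it and recursing on the rest yields `σ''`.
-/

open scoped BigOperators

theorem Set.Finite.exists_minimal_of_isStrictOrder {α : Type*} (r : α → α → Prop)
    [IsStrictOrder α r] {s : Set α} (hs : s.Finite) (hne : s.Nonempty) :
    ∃ a ∈ s, ∀ b ∈ s, ¬ r b a := by
  obtain ⟨⟨a, ha⟩, -, hmin⟩ := (hs.wellFoundedOn (r := r)).has_min Set.univ
    ⟨⟨_, hne.some_mem⟩, trivial⟩
  exact ⟨a, ha, fun b hb => hmin ⟨b, hb⟩ trivial⟩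

namespace PetriNet

variable {P T : Type} {N : PetriNet P T}

theorem Enabled.cast_fire {M : P → ℕ} {t : T} (h : N.Enabled M t) (p : P) :
    ((M p + N.Post p t - N.Pre p t : ℕ) : ℤ) = M p + N.C p t := by
  rw [C, Nat.cast_sub ((h p).trans (Nat.le_add_right _ _))]
  push_cast
  ring

theorem Fires.single {M : P → ℕ} {t : T} (h : N.Enabled M t) :
    N.Fires M [t] (fun p => M p + N.Post p t - N.Pre p t) :=
  .cons h (fun _ => rfl) (.nil _)

theorem Fires.append {M M₁ M₂ : P → ℕ} {σ τ : List T} (h₁ : N.Fires M σ M₁)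
    (h₂ : N.Fires M₁ τ M₂) : N.Fires M (σ ++ τ) M₂ := by
  induction h₁ with
  | nil => exact h₂
  | cons he hM _ ih => exact .cons he hM (ih h₂)

/-- The marking equation `M' = M + C · φ(σ)`, the firing vector `φ(σ)` being the multiset `↑σ`. -/
theorem Fires.marking_eq {M M' : P → ℕ} {σ : List T} (h : N.Fires M σ M') (p : P) :
    (M' p : ℤ) = M p + ((σ : Multiset T).map (N.C p)).sum := by
  induction h with
  | nil => simp
  | cons he hM _ ih =>
    rw [ih, hM, he.cast_fire]
    simp only [← Multiset.cons_coe, Multiset.map_cons, Multiset.sum_cons]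
    ring

def Causes (N : PetriNet P T) (TI : Set T) (v u : T) : Prop :=
  Relation.TransGen (N.Arc TI) (.inr v) (.inr u)

theorem AcyclicOn.isStrictOrder_causes {TI : Set T} (hac : N.AcyclicOn TI) :
    IsStrictOrder T (N.Causes TI) where
  irrefl u := hac (.inr u)
  trans _ _ _ := Relation.TransGen.trans

theorem causes_of_post_pre {TI : Set T} {v u : T} {p : P} (hv : v ∈ TI) (hu : u ∈ TI)
    (hpost : 0 < N.Post p v) (hpre : 0 < N.Pre p u) : N.Causes TI v u :=
  .head (show N.Arc TI (.inr v) (.inl p) from ⟨hv, hpost⟩)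
    (.single (show N.Arc TI (.inl p) (.inr u) from ⟨hu, hpre⟩))

variable [DecidableEq T]

theorem enabled_of_forall_not_causes {TI : Set T} {m : Multiset T} {M M' : P → ℕ} {u : T}
    (hm : ∀ v ∈ m, v ∈ TI) (hu : u ∈ m) (hmin : ∀ v ∈ m, ¬ N.Causes TI v u)
    (hM : ∀ p, (M' p : ℤ) = M p + (m.map (N.C p)).sum) : N.Enabled M u := by
  intro p
  rcases Nat.eq_zero_or_pos (N.Pre p u) with hpre | hpre
  · simp [hpre]
  have hC : ∀ v ∈ m, N.C p v = -N.Pre p v := fun v hv => by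
    have : N.Post p v = 0 := by
      by_contra hpost
      exact hmin v hv (causes_of_post_pre (hm v hv) (hm u hu) (Nat.pos_of_ne_zero hpost) hpre)
    simp [C, this]
  have hrest : ((m.erase u).map (N.C p)).sum ≤ 0 := by
    simpa using Multiset.sum_map_le_sum_map (N.C p) (fun _ => 0) fun v hv =>
      (hC v (Multiset.mem_of_mem_erase hv)).trans_le (by simp)
  have hM := hM p
  rw [← Multiset.cons_erase hu, Multiset.map_cons, Multiset.sum_cons, hC u hu] at hM
  omega

theorem AcyclicOn.exists_fires {TI : Set T} (hac : N.AcyclicOn TI) (m : Multiset T)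
    (hm : ∀ v ∈ m, v ∈ TI) {M M' : P → ℕ}
    (hM : ∀ p, (M' p : ℤ) = M p + (m.map (N.C p)).sum) :
    ∃ σ : List T, (σ : Multiset T) = m ∧ N.Fires M σ M' := by
  induction m using Multiset.strongInductionOn generalizing M with
  | ih m ih =>
    rcases eq_or_ne m 0 with rfl | hne
    · refine ⟨[], rfl, ?_⟩
      convert Fires.nil M
      ext p
      simpa using hM p
    have := hac.isStrictOrder_causes
    obtain ⟨u, hu, hmin⟩ := m.toFinset.finite_toSet.exists_minimal_of_isStrictOrder
      (N.Causes TI) (by simpa using hne)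
    simp only [Finset.mem_coe, Multiset.mem_toFinset] at hu hmin
    have hen := enabled_of_forall_not_causes hm hu hmin hM
    obtain ⟨σ, hσ, hfire⟩ := ih (m.erase u) (Multiset.erase_lt.2 hu)
      (fun v hv => hm v (Multiset.mem_of_mem_erase hv)) fun p => by
        rw [hen.cast_fire, hM p, ← Multiset.cons_erase hu, Multiset.map_cons,
          Multiset.sum_cons, Multiset.erase_cons_head]
        ring
    refine ⟨u :: σ, ?_, (Fires.single hen).append hfire⟩
    rw [← Multiset.cons_coe, hσ, Multiset.cons_erase hu]

end PetriNet

open PetriNet in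
theorem statement6_general {P T : Type} [DecidableEq T]
    (N : PetriNet P T) (TE TI : Set T)
    (hbp : N.IsBasisPartition TE TI)
    (M : P → ℕ)
    (t : T)
    (σ σ' : List T) (hσ : σ ∈ N.Expl TI M t) (hσ' : σ' ∈ N.Expl TI M t)
    (hge : ∀ u, σ'.count u ≤ σ.count u)
    (M' : P → ℕ) (hfire : N.Fires M (σ ++ [t]) M') :
    ∃ σ'' : List T, (∀ u ∈ σ'', u ∈ TI) ∧
      (∀ u, σ''.count u = σ.count u - σ'.count u) ∧
      N.Fires M (σ' ++ [t] ++ σ'') M' := by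
  obtain ⟨-, M₁, hfire₁, hen⟩ := hσ'
  have hfire₂ := hfire₁.append (Fires.single hen)
  have hle : (σ' : Multiset T) ≤ σ := Multiset.le_iff_count.2 fun u => by
    simpa only [Multiset.coe_count] using hge u
  have hmTI : ∀ u ∈ (σ : Multiset T) - σ', u ∈ TI := fun u hu =>
    hσ.1 u (Multiset.mem_coe.1 (Multiset.mem_of_le tsub_le_self hu))
  have hmarking : ∀ p, (M' p : ℤ) =
      ((M₁ p + N.Post p t - N.Pre p t : ℕ) : ℤ) + (((σ : Multiset T) - σ').map (N.C p)).sum := by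
    intro p
    have h := hfire.marking_eq p
    have h₂ := hfire₂.marking_eq p
    rw [← Multiset.coe_add, ← add_tsub_cancel_of_le hle] at h
    rw [← Multiset.coe_add] at h₂
    simp only [Multiset.map_add, Multiset.sum_add] at h h₂ ⊢
    linarith
  obtain ⟨σ'', hσ'', hfire''⟩ := hbp.2.exists_fires _ hmTI hmarking
  refine ⟨σ'', fun u hu => hmTI u (hσ'' ▸ Multiset.mem_coe.2 hu), fun u => ?_,
    hfire₂.append hfire''⟩
  rw [← Multiset.coe_count, hσ'', Multiset.count_sub, Multiset.coe_count, Multiset.coe_count]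

open PetriNet in
/-- If `σ, σ' ∈ Σ(M,t)` with `φ(σ) − φ(σ') = ỹ ≥ 0` and
`M[σ t⟩M'`, then there is `σ'' ∈ T_I*` with `φ(σ'') = ỹ` and
`M[σ' t σ''⟩M'`. -/
theorem statement6 {P T : Type} [Fintype T] [DecidableEq T]
    (N : PetriNet P T) (M0 : P → ℕ) (TE TI : Set T)
    (hbp : N.IsBasisPartition TE TI) (hbnd : N.Bounded M0)
    (M : P → ℕ) (hM : M ∈ N.Reach M0)
    (t : T) (ht : t ∈ TE)
    (σ σ' : List T) (hσ : σ ∈ N.Expl TI M t) (hσ' : σ' ∈ N.Expl TI M t)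
    (hge : ∀ u, σ'.count u ≤ σ.count u)
    (M' : P → ℕ) (hfire : N.Fires M (σ ++ [t]) M') :
    ∃ σ'' : List T, (∀ u ∈ σ'', u ∈ TI) ∧
      (∀ u, σ''.count u = σ.count u - σ'.count u) ∧
      N.Fires M (σ' ++ [t] ++ σ'') M' :=
  statement6_general N TE TI hbp M t σ σ' hσ hσ' hge M' hfire
end
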